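/- Let 𝒜 be a complex Banach algebra, let L₀, L₁, L₂, L₃ ∈ 𝒜, let Λ ≥ 0 satisfy ‖Lₖ‖ ≤ Λ for every k ∈ {0,1,2,3}, and let τ ≥ 0. Define the second-order product formula S₂(τ) = e^{(τ/2)L₀} e^{(τ/2)L₁} e^{(τ/2)L₂} e^{(τ/2)L₃} e^{(τ/2)L₃} e^{(τ/2)L₂} e^{(τ/2)L₁} e^{(τ/2)L₀}. Then ‖exp(τ(L₀+L₁+L₂+L₃)) − S₂(τ)‖ ≤ ((4τΛ)³/3) · e^{4τΛ}. -/

import Mathlib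

open NormedSpace

/-- The second-order Suzuki–Lie–Trotter product formula
`S₂(τ) = e^{(τ/2)L₀} e^{(τ/2)L₁} e^{(τ/2)L₂} e^{(τ/2)L₃} e^{(τ/2)L₃} e^{(τ/2)L₂}
e^{(τ/2)L₁} e^{(τ/2)L₀}` for four generators in a complex Banach algebra. -/
noncomputable def trotterS2 {𝒜 : Type*} [NormedRing 𝒜] [NormedAlgebra ℂ 𝒜]
    (L₀ L₁ L₂ L₃ : 𝒜) (τ : ℝ) : 𝒜 :=
  exp (((τ / 2 : ℝ) : ℂ) • L₀) * exp (((τ / 2 : ℝ) : ℂ) • L₁) *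
    exp (((τ / 2 : ℝ) : ℂ) • L₂) * exp (((τ / 2 : ℝ) : ℂ) • L₃) *
    exp (((τ / 2 : ℝ) : ℂ) • L₃) * exp (((τ / 2 : ℝ) : ℂ) • L₂) *
    exp (((τ / 2 : ℝ) : ℂ) • L₁) * exp (((τ / 2 : ℝ) : ℂ) • L₀)

/-!
Majorant argument. Split an element `X` as `1 + x₁ + x₂ + R`, with first-order, second-order and
remainder parts dominated by the corresponding parts `s`, `s²/2`, `eˢ - 1 - s - s²/2` of the
scalar series `eˢ`. Such splittings multiply (with `s` adding), since `eˢ eᵗ = eˢ⁺ᵗ` is exactly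
the identity that the termwise bounds add up to. The symmetric product `S₂(τ)` then has the same
first- and second-order parts `b` and `b²/2` as `exp b`, `b = τ(L₀ + L₁ + L₂ + L₃)`, so the two
differ by at most twice the scalar tail `eˣ - 1 - x - x²/2 ≤ x³/6 · eˣ` at `x = 4τΛ`.
-/

open Nat Finset

namespace NormedSpace

variable {𝕂 𝔸 : Type*} [RCLike 𝕂] [NormedRing 𝔸] [NormedAlgebra 𝕂 𝔸] [CompleteSpace 𝔸]

variable (𝕂) in
theorem exp_sub_sum_range_eq_tsum (a : 𝔸) (n : ℕ) :
    exp a - ∑ i ∈ range n, (i !⁻¹ : 𝕂) • a ^ i = ∑' i, ((i + n)!⁻¹ : 𝕂) • a ^ (i + n) := by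
  rw [congrFun (exp_eq_tsum 𝕂) a, ← (expSeries_summable' (𝕂 := 𝕂) a).sum_add_tsum_nat_add n,
    add_sub_cancel_left]

theorem _root_.Real.exp_sub_sum_range_eq_tsum (x : ℝ) (n : ℕ) :
    Real.exp x - ∑ i ∈ range n, x ^ i / i ! = ∑' i, x ^ (i + n) / (i + n)! := by
  simpa [Real.exp_eq_exp_ℝ, div_eq_inv_mul] using NormedSpace.exp_sub_sum_range_eq_tsum ℝ x n

theorem norm_exp_sub_sum_range_le {n : ℕ} (hn : 0 < n) {a : 𝔸} {s : ℝ} (ha : ‖a‖ ≤ s) :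
    ‖exp a - ∑ i ∈ range n, (i !⁻¹ : 𝕂) • a ^ i‖ ≤ Real.exp s - ∑ i ∈ range n, s ^ i / i ! := by
  rw [exp_sub_sum_range_eq_tsum 𝕂, Real.exp_sub_sum_range_eq_tsum]
  refine tsum_of_norm_bounded
    ((summable_nat_add_iff n).2 (Real.summable_pow_div_factorial s)).hasSum fun i => ?_
  rw [norm_smul, norm_inv, RCLike.norm_natCast, ← div_eq_inv_mul]
  gcongr
  exact (norm_pow_le' a (by omega)).trans (pow_le_pow_left₀ (norm_nonneg a) ha _)

end NormedSpace

theorem Real.exp_sub_sum_range_le (n : ℕ) {x : ℝ} (hx : 0 ≤ x) :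
    Real.exp x - ∑ i ∈ range n, x ^ i / i ! ≤ x ^ n / n ! * Real.exp x := by
  have hsum := Real.summable_pow_div_factorial x
  rw [Real.exp_sub_sum_range_eq_tsum, Real.exp_eq_exp_ℝ, exp_eq_tsum_div, ← tsum_mul_left]
  refine Summable.tsum_le_tsum (fun i => ?_) ((summable_nat_add_iff n).2 hsum) (hsum.mul_left _)
  have hfac : ((i ! * n ! : ℕ) : ℝ) ≤ (i + n)! :=
    Nat.cast_le.2 (Nat.le_of_dvd (factorial_pos _) (factorial_mul_factorial_dvd_factorial_add i n))
  rw [show x ^ n / n ! * (x ^ i / i !) = x ^ (i + n) / (i ! * n !) by ring]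
  push_cast at hfac
  gcongr

structure SecondOrderExpansion {𝔸 : Type*} [NormedRing 𝔸] (X x₁ x₂ : 𝔸) (s : ℝ) : Prop where
  norm_first_le : ‖x₁‖ ≤ s
  norm_second_le : ‖x₂‖ ≤ s ^ 2 / 2
  norm_remainder_le : ‖X - (1 + x₁ + x₂)‖ ≤ Real.exp s - (1 + s + s ^ 2 / 2)

namespace SecondOrderExpansion

variable {𝔸 : Type*} [NormedRing 𝔸] {X Y x₁ x₂ y₁ y₂ : 𝔸} {s t : ℝ}

theorem mul (hX : SecondOrderExpansion X x₁ x₂ s) (hY : SecondOrderExpansion Y y₁ y₂ t) :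
    SecondOrderExpansion (X * Y) (x₁ + y₁) (x₂ + x₁ * y₁ + y₂) (s + t) where
  norm_first_le := norm_add_le_of_le hX.norm_first_le hY.norm_first_le
  norm_second_le := by
    have := (norm_add₃_le (a := x₂) (b := x₁ * y₁) (c := y₂)).trans <|
      add_le_add_three hX.norm_second_le (norm_mul_le_of_le hX.norm_first_le hY.norm_first_le)
        hY.norm_second_le
    linarith
  norm_remainder_le := by
    obtain ⟨hx₁, hx₂, hE⟩ := hX
    obtain ⟨hy₁, hy₂, hF⟩ := hY
    generalize hEdef : X - (1 + x₁ + x₂) = E at hE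
    generalize hFdef : Y - (1 + y₁ + y₂) = F at hF
    obtain rfl : X = 1 + x₁ + x₂ + E := by rw [← hEdef]; abel
    obtain rfl : Y = 1 + y₁ + y₂ + F := by rw [← hFdef]; abel
    have hexpand :
        (1 + x₁ + x₂ + E) * (1 + y₁ + y₂ + F) - (1 + (x₁ + y₁) + (x₂ + x₁ * y₁ + y₂)) =
        x₁ * y₂ + x₂ * y₁ + x₂ * y₂ + E + E * y₁ + E * y₂ + F + x₁ * F + x₂ * F + E * F := by
      noncomm_ring
    set Rs := Real.exp s - (1 + s + s ^ 2 / 2) with hRs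
    set Rt := Real.exp t - (1 + t + t ^ 2 / 2) with hRt
    rw [hexpand]
    calc
      _ ≤ s * (t ^ 2 / 2) + s ^ 2 / 2 * t + s ^ 2 / 2 * (t ^ 2 / 2) + Rs + Rs * t +
          Rs * (t ^ 2 / 2) + Rt + s * Rt + s ^ 2 / 2 * Rt + Rs * Rt := by
        repeat refine norm_add_le_of_le ?_ ?_
        all_goals first | assumption | exact norm_mul_le_of_le ‹_› ‹_›
      _ = _ := by rw [hRs, hRt, Real.exp_add]; ring

theorem norm_sub_le (hX : SecondOrderExpansion X x₁ x₂ s) (hY : SecondOrderExpansion Y x₁ x₂ s) :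
    ‖X - Y‖ ≤ 2 * (Real.exp s - (1 + s + s ^ 2 / 2)) := by
  rw [← sub_sub_sub_cancel_right X Y (1 + x₁ + x₂), two_mul]
  exact norm_sub_le_of_le hX.norm_remainder_le hY.norm_remainder_le

end SecondOrderExpansion

theorem secondOrderExpansion_exp {𝕂 𝔸 : Type*} [RCLike 𝕂] [NormedRing 𝔸] [NormedAlgebra 𝕂 𝔸]
    [CompleteSpace 𝔸] {a : 𝔸} {s : ℝ} (ha : ‖a‖ ≤ s) :
    SecondOrderExpansion (exp a) a ((2 : 𝕂)⁻¹ • a ^ 2) s where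
  norm_first_le := ha
  norm_second_le := by
    rw [norm_smul, norm_inv, RCLike.norm_ofNat, inv_mul_eq_div]
    gcongr
    exact (norm_pow_le' a two_pos).trans (pow_le_pow_left₀ (norm_nonneg a) ha 2)
  norm_remainder_le := by
    simpa [Finset.sum_range_succ, add_assoc] using
      norm_exp_sub_sum_range_le (𝕂 := 𝕂) (n := 3) (by norm_num) ha

theorem trotter_second_order_step_bound_general {𝒜 : Type*} [NormedRing 𝒜] [NormedAlgebra ℂ 𝒜]
    [CompleteSpace 𝒜] (L₀ L₁ L₂ L₃ : 𝒜) (Λ τ : ℝ)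
    (h0 : ‖L₀‖ ≤ Λ) (h1 : ‖L₁‖ ≤ Λ) (h2 : ‖L₂‖ ≤ Λ) (h3 : ‖L₃‖ ≤ Λ) (hτ : 0 ≤ τ) :
    ‖exp (((τ : ℝ) : ℂ) • (L₀ + L₁ + L₂ + L₃)) - trotterS2 L₀ L₁ L₂ L₃ τ‖ ≤
      (4 * τ * Λ) ^ 3 / 3 * Real.exp (4 * τ * Λ) := by
  set c : ℂ := ((τ / 2 : ℝ) : ℂ)
  set b : 𝒜 := ((τ : ℝ) : ℂ) • (L₀ + L₁ + L₂ + L₃) with hb_def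
  have hfactor : ∀ L : 𝒜, ‖L‖ ≤ Λ →
      SecondOrderExpansion (exp (c • L)) (c • L) ((2 : ℂ)⁻¹ • (c • L) ^ 2) (τ / 2 * Λ) := by
    intro L hL
    refine secondOrderExpansion_exp ?_
    rw [norm_smul, Complex.norm_real, Real.norm_of_nonneg (by positivity)]
    gcongr
  have hb : b = c • L₀ + c • L₁ + c • L₂ + c • L₃ + c • L₃ + c • L₂ + c • L₁ + c • L₀ := by
    rw [hb_def, show ((τ : ℝ) : ℂ) = c + c by push_cast [c]; ring, add_smul]
    simp only [smul_add]
    abel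
  have hS : SecondOrderExpansion (trotterS2 L₀ L₁ L₂ L₃ τ) b ((2 : ℂ)⁻¹ • b ^ 2) (4 * τ * Λ) := by
    convert (((((((hfactor L₀ h0).mul (hfactor L₁ h1)).mul (hfactor L₂ h2)).mul
      (hfactor L₃ h3)).mul (hfactor L₃ h3)).mul (hfactor L₂ h2)).mul (hfactor L₁ h1)).mul
      (hfactor L₀ h0) using 1
    · rfl
    -- the palindromic order pairs each product `Lᵢ Lⱼ` with `Lⱼ Lᵢ`, giving exactly `b²/2`
    · rw [hb]
      generalize c • L₀ = A, c • L₁ = B, c • L₂ = C, c • L₃ = D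
      simp only [sq, add_mul, mul_add]
      module
    · ring
  have hx : 0 ≤ 4 * τ * Λ := (norm_nonneg b).trans hS.norm_first_le
  calc
    _ ≤ 2 * (Real.exp (4 * τ * Λ) - (1 + 4 * τ * Λ + (4 * τ * Λ) ^ 2 / 2)) :=
      (secondOrderExpansion_exp hS.norm_first_le).norm_sub_le hS
    _ ≤ 2 * ((4 * τ * Λ) ^ 3 / 6 * Real.exp (4 * τ * Λ)) := by
      gcongr
      simpa [Finset.sum_range_succ, Nat.factorial, add_assoc] using Real.exp_sub_sum_range_le 3 hx
    _ = _ := by ring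

/-- In a complex Banach algebra, if `‖Lₖ‖ ≤ Λ` for `k = 0,1,2,3` and
`τ ≥ 0`, then `‖exp(τ(L₀+L₁+L₂+L₃)) − S₂(τ)‖ ≤ ((4τΛ)³/3)·e^{4τΛ}`. -/
theorem trotter_second_order_step_bound {𝒜 : Type*} [NormedRing 𝒜] [NormedAlgebra ℂ 𝒜]
    [CompleteSpace 𝒜] (L₀ L₁ L₂ L₃ : 𝒜) (Λ τ : ℝ) (hΛ : 0 ≤ Λ)
    (h0 : ‖L₀‖ ≤ Λ) (h1 : ‖L₁‖ ≤ Λ) (h2 : ‖L₂‖ ≤ Λ) (h3 : ‖L₃‖ ≤ Λ) (hτ : 0 ≤ τ) :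
    ‖exp (((τ : ℝ) : ℂ) • (L₀ + L₁ + L₂ + L₃)) - trotterS2 L₀ L₁ L₂ L₃ τ‖ ≤
      (4 * τ * Λ) ^ 3 / 3 * Real.exp (4 * τ * Λ) :=
  trotter_second_order_step_bound_general L₀ L₁ L₂ L₃ Λ τ h0 h1 h2 h3 hτ
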